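/- Identification of the structural logit noise parameter: suppose for all (LPR, LLR) ∈ ℝ², 1/(1 + exp{(2Π_s(LPR,LLR,β*) − 1)/σ*}) = 1/(1 + exp{(2Π_s(LPR,LLR,β) − 1)/σ}) where Π_s(LPR,LLR,β) = 1/(1 + exp{−β₀ − β₁·LLR − β₂·LPR}) and σ, σ* > 0. Then taking the limit LPR → ∞ (with LLR fixed) forces Π_s → 1 for both parameterizations with β₂, β₂* > 0, and the limiting equality 1/(1+exp{1/σ*}) = 1/(1+exp{1/σ}) implies σ = σ*. -/

import Mathlib

open Real Filter Topology

/-! As `LPR → ∞` with `β₂ > 0`, the subjective posterior `Π_s` tends to `1` for every `LLR`, so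
the argument `(2 Π_s − 1)/σ` of the choice probability tends to `1/σ`. The choice probability
`1/(1 + eˣ)` is injective in `x`, hence equal choice probabilities force equal arguments, and
comparing their limits gives `1/σ* = 1/σ`. -/

lemma one_div_one_add_exp_eq_sigmoid (x : ℝ) : 1 / (1 + exp x) = sigmoid (-x) := by
  rw [sigmoid_def, neg_neg, one_div]

lemma one_div_one_add_exp_injective : Function.Injective fun x : ℝ => 1 / (1 + exp x) := by
  intro x y h
  simpa only [one_div_one_add_exp_eq_sigmoid, sigmoid_inj, neg_inj] using h

lemma tendsto_sigmoid_add_mul_atTop (a : ℝ) {b : ℝ} (hb : 0 < b) :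
    Tendsto (fun x => sigmoid (a + b * x)) atTop (𝓝 1) :=
  tendsto_sigmoid_atTop.comp (tendsto_atTop_add_const_left _ a (tendsto_id.const_mul_atTop hb))

lemma eq_of_tendsto_of_div_eq {α : Type*} {l : Filter α} [l.NeBot] {f g : α → ℝ} {c s t : ℝ}
    (hf : Tendsto f l (𝓝 c)) (hg : Tendsto g l (𝓝 c)) (hc : c ≠ 0)
    (h : ∀ x, f x / s = g x / t) : s = t := by
  have hlim : c / s = c / t :=
    tendsto_nhds_unique (hf.div_const s) ((hg.div_const t).congr fun x => (h x).symm)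
  simpa only [div_eq_mul_inv, mul_right_inj' hc, inv_inj] using hlim

/-- The paper's `Π_s(LPR, LLR, β)` with `β = (b0, b1, b2)`. -/
noncomputable def subjectivePosterior (b0 b1 b2 LPR LLR : ℝ) : ℝ :=
  1 / (1 + exp (-b0 - b1 * LLR - b2 * LPR))

lemma subjectivePosterior_eq_sigmoid (b0 b1 b2 LPR LLR : ℝ) :
    subjectivePosterior b0 b1 b2 LPR LLR = sigmoid (b0 + b1 * LLR + b2 * LPR) := by
  rw [subjectivePosterior, one_div_one_add_exp_eq_sigmoid]
  ring_nf

lemma tendsto_subjectivePosterior_atTop (b0 b1 LLR : ℝ) {b2 : ℝ} (hb2 : 0 < b2) :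
    Tendsto (fun LPR => subjectivePosterior b0 b1 b2 LPR LLR) atTop (𝓝 1) := by
  simpa only [subjectivePosterior_eq_sigmoid] using
    tendsto_sigmoid_add_mul_atTop (b0 + b1 * LLR) hb2

lemma tendsto_two_mul_subjectivePosterior_sub_one_atTop (b0 b1 LLR : ℝ) {b2 : ℝ} (hb2 : 0 < b2) :
    Tendsto (fun LPR => 2 * subjectivePosterior b0 b1 b2 LPR LLR - 1) atTop (𝓝 1) := by
  convert ((tendsto_subjectivePosterior_atTop b0 b1 LLR hb2).const_mul 2).sub_const 1
  norm_num

theorem structural_logit_sigma_identified_general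
    (σ σstar b0 b1 b2 b0s b1s b2s : ℝ)
    (hb2 : 0 < b2) (hb2s : 0 < b2s)
    (heq : ∀ LPR LLR : ℝ,
      1 / (1 + Real.exp ((2 * (1 / (1 + Real.exp (-b0s - b1s * LLR - b2s * LPR))) - 1) / σstar)) =
      1 / (1 + Real.exp ((2 * (1 / (1 + Real.exp (-b0 - b1 * LLR - b2 * LPR))) - 1) / σ))) :
    (∀ LLR : ℝ,
      Tendsto (fun LPR : ℝ => 1 / (1 + Real.exp (-b0 - b1 * LLR - b2 * LPR)))
        atTop (nhds 1) ∧
      Tendsto (fun LPR : ℝ => 1 / (1 + Real.exp (-b0s - b1s * LLR - b2s * LPR)))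
        atTop (nhds 1)) ∧
    σstar = σ := by
  refine ⟨fun LLR => ⟨tendsto_subjectivePosterior_atTop b0 b1 LLR hb2,
    tendsto_subjectivePosterior_atTop b0s b1s LLR hb2s⟩, ?_⟩
  exact eq_of_tendsto_of_div_eq (tendsto_two_mul_subjectivePosterior_sub_one_atTop b0s b1s 0 hb2s)
    (tendsto_two_mul_subjectivePosterior_sub_one_atTop b0 b1 0 hb2) one_ne_zero
    fun LPR => one_div_one_add_exp_injective (heq LPR 0)

/-- Identification of the structural logit noise parameter: if the choice
probabilities coincide for all `(LPR, LLR)` and `β₂, β₂* > 0`, then as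
`LPR → ∞` both subjective posteriors tend to 1, and `σ = σ*`. -/
theorem structural_logit_sigma_identified
    (σ σstar b0 b1 b2 b0s b1s b2s : ℝ)
    (hσ : 0 < σ) (hσs : 0 < σstar) (hb2 : 0 < b2) (hb2s : 0 < b2s)
    (heq : ∀ LPR LLR : ℝ,
      1 / (1 + Real.exp ((2 * (1 / (1 + Real.exp (-b0s - b1s * LLR - b2s * LPR))) - 1) / σstar)) =
      1 / (1 + Real.exp ((2 * (1 / (1 + Real.exp (-b0 - b1 * LLR - b2 * LPR))) - 1) / σ))) :
    (∀ LLR : ℝ,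
      Tendsto (fun LPR : ℝ => 1 / (1 + Real.exp (-b0 - b1 * LLR - b2 * LPR)))
        atTop (nhds 1) ∧
      Tendsto (fun LPR : ℝ => 1 / (1 + Real.exp (-b0s - b1s * LLR - b2s * LPR)))
        atTop (nhds 1)) ∧
    σstar = σ :=
  structural_logit_sigma_identified_general σ σstar b0 b1 b2 b0s b1s b2s hb2 hb2s heq
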